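/- arXiv:2408.16252 — 3 statements merged into one kernel-verified Lean document; each statement's English description precedes it below -/
import Mathlib

section
/- Let f^N be a symmetric probability measure on (ℝ^d)^N and f̄ a probability measure on ℝ^d. For 1 ≤ k ≤ ℓ ≤ N, the normalized relative entropies of the marginals satisfy (1/k) H(f^{(k)} | f̄^{⊗k}) ≤ (1/ℓ) H(f^{(ℓ)} | f̄^{⊗ℓ}), where f^{(j)} denotes the j-th marginal of f^N. -/
open MeasureTheory Real Function
open scoped ENNReal

set_option linter.unusedSectionVars false

section Aux
variable {α : Type*} [MeasurableSpace α]



lemma my_kl_nonneg (μ ρ : Measure α) [IsProbabilityMeasure μ] [IsProbabilityMeasure ρ]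
    (h : μ ≪ ρ) (hint : Integrable (llr μ ρ) μ) : 0 ≤ ∫ x, llr μ ρ x ∂μ := by
  have h1 : llr μ ρ =ᵐ[μ] fun x => - log ((ρ.rnDeriv μ x).toReal) := by
    filter_upwards [neg_llr h] with x hx
    have : - llr μ ρ x = llr ρ μ x := hx
    simp only [llr] at this ⊢
    linarith
  have hpos : ∀ᵐ x ∂μ, 0 < ρ.rnDeriv μ x := Measure.rnDeriv_pos' h
  have hlt : ∀ᵐ x ∂μ, ρ.rnDeriv μ x < ∞ := Measure.rnDeriv_lt_top ρ μ
  have h2 : ∀ᵐ x ∂μ, 1 - (ρ.rnDeriv μ x).toReal ≤ llr μ ρ x := by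
    filter_upwards [h1, hpos, hlt] with x hx hp hl
    rw [hx]
    have hp' : 0 < (ρ.rnDeriv μ x).toReal := ENNReal.toReal_pos hp.ne' hl.ne
    have := Real.log_le_sub_one_of_pos hp'
    linarith
  have hint2 : Integrable (fun x => 1 - (ρ.rnDeriv μ x).toReal) μ :=
    (integrable_const 1).sub (Measure.integrable_toReal_rnDeriv)
  have h3 : ∫ x, (1 - (ρ.rnDeriv μ x).toReal) ∂μ ≤ ∫ x, llr μ ρ x ∂μ :=
    integral_mono_ae hint2 hint h2
  have h4 : ∫ x, (1 - (ρ.rnDeriv μ x).toReal) ∂μ = 1 - ∫ x, (ρ.rnDeriv μ x).toReal ∂μ := by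
    rw [integral_sub (integrable_const 1) Measure.integrable_toReal_rnDeriv]
    simp
  have h5 : ∫ x, (ρ.rnDeriv μ x).toReal ∂μ ≤ 1 := by
    have := Measure.lintegral_rnDeriv_le (μ := ρ) (ν := μ)
    calc ∫ x, (ρ.rnDeriv μ x).toReal ∂μ
        = (∫⁻ x, ρ.rnDeriv μ x ∂μ).toReal := by
          rw [integral_toReal (Measure.measurable_rnDeriv ρ μ).aemeasurable hlt]
      _ ≤ (ρ Set.univ).toReal := ENNReal.toReal_mono (by simp) this
      _ = 1 := by simp
  linarith

lemma my_gibbs (μ ν : Measure α) [IsProbabilityMeasure μ] [IsProbabilityMeasure ν]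
    (h : μ ≪ ν) (hint : Integrable (llr μ ν) μ) (f : α → ℝ)
    (hfμ : Integrable f μ) (hfν : Integrable (fun x => exp (f x)) ν) :
    ∫ x, f x ∂μ - log (∫ x, exp (f x) ∂ν) ≤ ∫ x, llr μ ν x ∂μ := by
  have hρ : IsProbabilityMeasure (ν.tilted f) := isProbabilityMeasure_tilted hfν
  have hμρ : μ ≪ ν.tilted f := h.trans (absolutelyContinuous_tilted hfν)
  have hintρ : Integrable (llr μ (ν.tilted f)) μ :=
    integrable_llr_tilted_right h hfμ hint hfν
  have h0 : 0 ≤ ∫ x, llr μ (ν.tilted f) x ∂μ := my_kl_nonneg μ _ hμρ hintρ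
  rw [integral_llr_tilted_right h hfμ hfν hint] at h0
  linarith



lemma my_measurable_sel {m n : ℕ} (e : Fin n → Fin m) :
    Measurable (fun (x : Fin m → α) (j : Fin n) => x (e j)) :=
  measurable_pi_lambda _ (fun j => measurable_pi_apply (e j))

lemma my_map_sel_pi {m n : ℕ} (ν : Measure α) [IsProbabilityMeasure ν]
    (e : Fin n → Fin m) (he : Function.Injective e) :
    (Measure.pi fun _ : Fin m => ν).map (fun x (j : Fin n) => x (e j))
      = Measure.pi (fun _ : Fin n => ν) := by
  refine (Measure.pi_eq fun B hB => ?_).symm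
  rw [Measure.map_apply (my_measurable_sel e) (MeasurableSet.univ_pi hB)]
  have hpre : (fun (x : Fin m → α) (j : Fin n) => x (e j)) ⁻¹' (Set.pi Set.univ B)
      = Set.pi Set.univ (fun i => ⋂ (j : Fin n) (_ : e j = i), B j) := by
    ext x
    simp only [Set.mem_preimage, Set.mem_pi, Set.mem_univ, Set.mem_iInter, forall_true_left]
    constructor
    · intro hx i j hji
      subst hji; exact hx j
    · intro hx j
      exact hx (e j) j rfl
  rw [hpre, Measure.pi_pi]
  have hC : ∀ j : Fin n, (⋂ (j' : Fin n) (_ : e j' = e j), B j') = B j := by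
    intro j
    have : ∀ j' : Fin n, (⋂ (_ : e j' = e j), B j') = ⋂ (_ : j' = j), B j' := by
      intro j'; simp [he.eq_iff]
    rw [Set.iInter_congr this]
    exact Set.iInter_iInter_eq_left (b := j) (s := fun j' _ => B j')
  calc ∏ i : Fin m, ν (⋂ (j : Fin n) (_ : e j = i), B j)
      = ∏ i ∈ Finset.image e Finset.univ, ν (⋂ (j : Fin n) (_ : e j = i), B j) := by
        refine (Finset.prod_subset (Finset.subset_univ _) ?_).symm
        intro i _ hi
        have : ∀ j : Fin n, ¬ e j = i := by
          intro j hj; exact hi (Finset.mem_image.2 ⟨j, Finset.mem_univ j, hj⟩)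
        have : (⋂ (j : Fin n) (_ : e j = i), B j) = Set.univ := by
          simp [this]
        rw [this]; simp
    _ = ∏ j : Fin n, ν (⋂ (j' : Fin n) (_ : e j' = e j), B j') := by
        rw [Finset.prod_image]
        intro a _ b _ hab; exact he hab
    _ = ∏ j : Fin n, ν (B j) := by
        exact Finset.prod_congr rfl fun j _ => by rw [hC j]



lemma my_dep_update {m : ℕ} {S : Finset (Fin m)} {g : (Fin m → α) → ℝ≥0∞}
    (hdep : ∀ x y, (∀ i ∈ S, x i = y i) → g x = g y) {i : Fin m} (hi : i ∉ S)
    (x : Fin m → α) (xi : α) : g (update x i xi) = g x := by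
  refine hdep _ _ fun j hj => ?_
  have hji : j ≠ i := fun h => hi (h ▸ hj)
  exact update_of_ne hji _ _

/-- Marginalizing preserves "depends only on `S`" (in fact shrinks it to `S \ s`). -/
lemma my_dep_lmarginal {m : ℕ} (ν : Measure α) {S : Finset (Fin m)}
    {g : (Fin m → α) → ℝ≥0∞}
    (hdep : ∀ x y, (∀ i ∈ S, x i = y i) → g x = g y) (s : Finset (Fin m)) :
    ∀ x y, (∀ i ∈ S \ s, x i = y i) →
      (∫⋯∫⁻_s, g ∂(fun _ => ν)) x = (∫⋯∫⁻_s, g ∂(fun _ => ν)) y := by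
  intro x y hxy
  refine lintegral_congr fun z => ?_
  refine hdep _ _ fun i hi => ?_
  by_cases his : i ∈ s
  · simp [updateFinset, his]
  · simp only [updateFinset, his, dif_neg, if_neg]
    exact hxy i (Finset.mem_sdiff.2 ⟨hi, his⟩)

/-- If `g` depends only on coordinates in `S`, marginalizing over `S` gives
the full integral (against an iid product of probability measures). -/
lemma my_lmarginal_of_dep {m : ℕ} (ν : Measure α) [IsProbabilityMeasure ν]
    {S : Finset (Fin m)} {g : (Fin m → α) → ℝ≥0∞} (hg : Measurable g)
    (hdep : ∀ x y, (∀ i ∈ S, x i = y i) → g x = g y) (x : Fin m → α) :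
    (∫⋯∫⁻_S, g ∂(fun _ => ν)) x = ∫⁻ z, g z ∂(Measure.pi fun _ : Fin m => ν) := by
  have h1 : (∫⋯∫⁻_Sᶜ, g ∂(fun _ => ν)) = g := by
    funext y
    have : ∀ z, g (updateFinset y (Sᶜ) z) = g y := by
      intro z
      refine hdep _ _ fun i hi => ?_
      have : i ∉ (Sᶜ : Finset (Fin m)) := by simp [hi]
      simp [updateFinset, this]
    rw [lmarginal]
    simp only [this]
    simp
  calc (∫⋯∫⁻_S, g ∂(fun _ => ν)) x = (∫⋯∫⁻_S, (∫⋯∫⁻_Sᶜ, g ∂(fun _ => ν)) ∂(fun _ => ν)) x := by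
        rw [h1]
    _ = (∫⋯∫⁻_(S ∪ Sᶜ), g ∂(fun _ => ν)) x := by
        rw [lmarginal_union _ g hg disjoint_compl_right]
    _ = ∫⁻ z, g z ∂(Measure.pi fun _ : Fin m => ν) := by
        rw [Finset.union_compl, lmarginal_univ]

/-- Finner's inequality for a fractional partition, for an iid product of probability
measures. -/
lemma my_finner {m : ℕ} (ν : Measure α) [IsProbabilityMeasure ν] {T : Type*}
    (t : Finset T) (S : T → Finset (Fin m)) (w : T → ℝ) (hw0 : ∀ τ ∈ t, 0 ≤ w τ)
    (hw : ∀ i : Fin m, ∑ τ ∈ t, (if i ∈ S τ then w τ else 0) = 1)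
    (g : T → (Fin m → α) → ℝ≥0∞) (hg : ∀ τ ∈ t, Measurable (g τ))
    (hdep : ∀ τ ∈ t, ∀ x y, (∀ i ∈ S τ, x i = y i) → g τ x = g τ y) :
    ∫⁻ x, ∏ τ ∈ t, (g τ x) ^ (w τ) ∂(Measure.pi fun _ : Fin m => ν)
      ≤ ∏ τ ∈ t, (∫⁻ x, g τ x ∂(Measure.pi fun _ : Fin m => ν)) ^ (w τ) := by
  classical
  have hF : Measurable (fun x => ∏ τ ∈ t, (g τ x) ^ (w τ)) :=
    Finset.measurable_prod _ fun τ hτ => (hg τ hτ).pow_const _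
  -- main claim by induction
  have main : ∀ s : Finset (Fin m), ∀ x,
      (∫⋯∫⁻_s, (fun x => ∏ τ ∈ t, (g τ x) ^ (w τ)) ∂(fun _ => ν)) x
        ≤ ∏ τ ∈ t, ((∫⋯∫⁻_(s ∩ S τ), g τ ∂(fun _ => ν)) x) ^ (w τ) := by
    intro s
    induction s using Finset.induction with
    | empty => intro x; simp
    | @insert i s his ih =>
      intro x
      rw [lmarginal_insert _ hF his]
      have step1 : ∫⁻ xi, (∫⋯∫⁻_s, (fun x => ∏ τ ∈ t, (g τ x) ^ (w τ)) ∂(fun _ => ν))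
            (update x i xi) ∂ν
          ≤ ∫⁻ xi, ∏ τ ∈ t,
              ((∫⋯∫⁻_(s ∩ S τ), g τ ∂(fun _ => ν)) (update x i xi)) ^ (w τ) ∂ν :=
        lintegral_mono fun xi => ih _
      refine step1.trans ?_
      -- split into blocks containing i and not containing i
      set t₁ := t.filter (fun τ => i ∈ S τ) with ht₁
      set t₂ := t.filter (fun τ => i ∉ S τ) with ht₂
      have htsplit : t₂ ∪ t₁ = t := by
        rw [ht₁, ht₂, Finset.union_comm]
        exact Finset.filter_union_filter_not_eq _ t
      have hconst : ∀ τ ∈ t₂, ∀ xi,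
          (∫⋯∫⁻_(s ∩ S τ), g τ ∂(fun _ => ν)) (update x i xi)
            = (∫⋯∫⁻_(s ∩ S τ), g τ ∂(fun _ => ν)) x := by
        intro τ hτ xi
        have hτt : τ ∈ t := (Finset.mem_filter.1 hτ).1
        have hiτ : i ∉ S τ := (Finset.mem_filter.1 hτ).2
        refine my_dep_update (S := (S τ) \ (s ∩ S τ))
          (my_dep_lmarginal ν (hdep τ hτt) (s ∩ S τ)) ?_ x xi
        simp [hiτ]
      -- factor the t₂ part out of the integral
      have hmeas1 : ∀ τ ∈ t₁, Measurable
          (fun xi => (∫⋯∫⁻_(s ∩ S τ), g τ ∂(fun _ => ν)) (update x i xi)) := by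
        intro τ hτ
        exact ((hg τ (Finset.mem_filter.1 hτ).1).lmarginal _).comp (measurable_update x)
      calc ∫⁻ xi, ∏ τ ∈ t,
              ((∫⋯∫⁻_(s ∩ S τ), g τ ∂(fun _ => ν)) (update x i xi)) ^ (w τ) ∂ν
          = ∫⁻ xi, (∏ τ ∈ t₂, ((∫⋯∫⁻_(s ∩ S τ), g τ ∂(fun _ => ν)) x) ^ (w τ))
              * ∏ τ ∈ t₁, ((∫⋯∫⁻_(s ∩ S τ), g τ ∂(fun _ => ν)) (update x i xi)) ^ (w τ) ∂ν := by
            refine lintegral_congr fun xi => ?_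
            rw [← htsplit, Finset.prod_union (Finset.disjoint_filter_filter_not t t _).symm]
            congr 1
            exact Finset.prod_congr rfl fun τ hτ => by rw [hconst τ hτ xi]
        _ = (∏ τ ∈ t₂, ((∫⋯∫⁻_(s ∩ S τ), g τ ∂(fun _ => ν)) x) ^ (w τ))
              * ∫⁻ xi, ∏ τ ∈ t₁,
                  ((∫⋯∫⁻_(s ∩ S τ), g τ ∂(fun _ => ν)) (update x i xi)) ^ (w τ) ∂ν := by
            rw [lintegral_const_mul]
            exact Finset.measurable_prod _ fun τ hτ => ((hmeas1 τ hτ).pow_const _)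
        _ ≤ (∏ τ ∈ t₂, ((∫⋯∫⁻_(s ∩ S τ), g τ ∂(fun _ => ν)) x) ^ (w τ))
              * ∏ τ ∈ t₁, (∫⁻ xi, (∫⋯∫⁻_(s ∩ S τ), g τ ∂(fun _ => ν)) (update x i xi) ∂ν)
                  ^ (w τ) := by
            gcongr
            refine ENNReal.lintegral_prod_norm_pow_le _
              (fun τ hτ => (hmeas1 τ hτ).aemeasurable) ?_
              (fun τ hτ => hw0 τ (Finset.mem_filter.1 hτ).1)
            have := hw i
            rw [← htsplit, Finset.sum_union (Finset.disjoint_filter_filter_not t t _).symm] at this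
            have h2 : ∑ τ ∈ t₂, (if i ∈ S τ then w τ else 0) = 0 :=
              Finset.sum_eq_zero fun τ hτ => by
                simp [(Finset.mem_filter.1 hτ).2]
            have h1 : ∑ τ ∈ t₁, (if i ∈ S τ then w τ else 0) = ∑ τ ∈ t₁, w τ :=
              Finset.sum_congr rfl fun τ hτ => by
                simp [(Finset.mem_filter.1 hτ).2]
            rw [h2, h1] at this
            linarith
        _ = ∏ τ ∈ t, ((∫⋯∫⁻_((insert i s) ∩ S τ), g τ ∂(fun _ => ν)) x) ^ (w τ) := by
            rw [← htsplit, Finset.prod_union (Finset.disjoint_filter_filter_not t t _).symm]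
            congr 1
            · refine Finset.prod_congr rfl fun τ hτ => ?_
              have hiτ : i ∉ S τ := (Finset.mem_filter.1 hτ).2
              have : (insert i s) ∩ S τ = s ∩ S τ := by
                rw [Finset.insert_inter_of_notMem hiτ]
              rw [this]
            · refine Finset.prod_congr rfl fun τ hτ => ?_
              have hiτ : i ∈ S τ := (Finset.mem_filter.1 hτ).2
              have hins : (insert i s) ∩ S τ = insert i (s ∩ S τ) := by
                rw [Finset.insert_inter_of_mem hiτ]
              have hinotin : i ∉ s ∩ S τ := fun h => his (Finset.mem_inter.1 h).1
              rw [hins, lmarginal_insert _ (hg τ (Finset.mem_filter.1 hτ).1) hinotin]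
  -- conclude with s = univ
  cases isEmpty_or_nonempty (Fin m → α) with
  | inl h =>
    simp [lintegral_of_isEmpty]
  | inr h =>
    obtain ⟨x⟩ := h
    have := main Finset.univ x
    rw [lmarginal_univ] at this
    refine this.trans (le_of_eq ?_)
    refine Finset.prod_congr rfl fun τ hτ => ?_
    rw [Finset.univ_inter, my_lmarginal_of_dep ν (hg τ hτ) (hdep τ hτ) x]

lemma my_exists_perm {N n : ℕ} (c e : Fin n → Fin N)
    (hc : Function.Injective c) (he : Function.Injective e) :
    ∃ σ : Equiv.Perm (Fin N), ∀ j, σ (c j) = e j := by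
  classical
  have hcard : Fintype.card ((Set.range c)ᶜ : Set (Fin N))
      = Fintype.card ((Set.range e)ᶜ : Set (Fin N)) := by
    rw [Fintype.card_compl_set, Fintype.card_compl_set,
      Set.card_range_of_injective hc, Set.card_range_of_injective he]
  let ψ : ((Set.range c)ᶜ : Set (Fin N)) ≃ ((Set.range e)ᶜ : Set (Fin N)) :=
    Fintype.equivOfCardEq hcard
  let σ : Equiv.Perm (Fin N) :=
    (Equiv.Set.sumCompl (Set.range c)).symm.trans
      ((Equiv.sumCongr ((Equiv.ofInjective c hc).symm.trans (Equiv.ofInjective e he)) ψ).trans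
        (Equiv.Set.sumCompl (Set.range e)))
  refine ⟨σ, fun j => ?_⟩
  have h1 : (Equiv.Set.sumCompl (Set.range c)).symm (c j)
      = Sum.inl ⟨c j, Set.mem_range_self j⟩ :=
    Equiv.Set.sumCompl_symm_apply_of_mem (Set.mem_range_self j)
  have h2 : (Equiv.ofInjective c hc).symm ⟨c j, Set.mem_range_self j⟩ = j := by
    apply hc
    simp [Equiv.apply_ofInjective_symm hc]
  simp only [σ, Equiv.trans_apply, h1, Equiv.sumCongr_apply, Sum.map_inl, Equiv.coe_trans,
    Function.comp_apply, h2]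
  rw [Equiv.Set.sumCompl_apply_inl]
  rfl

lemma my_marginal_eq {β : Type*} [MeasurableSpace β] {N n : ℕ} (hn : n ≤ N)
    (μ : Measure (Fin N → β))
    (hsym : ∀ σ : Equiv.Perm (Fin N), Measure.map (fun x => x ∘ σ) μ = μ)
    (e : Fin n → Fin N) (he : Function.Injective e) :
    Measure.map (fun x (j : Fin n) => x (e j)) μ
      = Measure.map (fun x (j : Fin n) => x (Fin.castLE hn j)) μ := by
  obtain ⟨σ, hσ⟩ := my_exists_perm (Fin.castLE hn) e (Fin.castLE_injective hn) he
  have hmeas1 : Measurable (fun (x : Fin N → β) (j : Fin n) => x (Fin.castLE hn j)) :=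
    measurable_pi_lambda _ (fun j => measurable_pi_apply _)
  have hmeas2 : Measurable (fun (x : Fin N → β) => x ∘ σ) :=
    measurable_pi_lambda _ (fun j => measurable_pi_apply _)
  calc Measure.map (fun x (j : Fin n) => x (e j)) μ
      = Measure.map ((fun x (j : Fin n) => x (Fin.castLE hn j)) ∘ (fun x => x ∘ σ)) μ := by
        congr 1
        funext x
        simp only [Function.comp_apply]
        funext j
        rw [← hσ j]
    _ = Measure.map (fun x (j : Fin n) => x (Fin.castLE hn j)) (Measure.map (fun x => x ∘ σ) μ) :=
        (Measure.map_map hmeas1 hmeas2).symm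
    _ = Measure.map (fun x (j : Fin n) => x (Fin.castLE hn j)) μ := by rw [hsym σ]

end Aux

/-- Linear scaling of relative entropy for symmetric measures: if `f^N` is a
symmetric probability measure on `(ℝ^d)^N` and `f̄` a probability measure on `ℝ^d`,
then for `1 ≤ k ≤ ℓ ≤ N` the normalized relative entropies of the marginals satisfy
`(1/k) H(f^{(k)} | f̄^{⊗k}) ≤ (1/ℓ) H(f^{(ℓ)} | f̄^{⊗ℓ})`. -/
theorem normalized_relative_entropy_marginal_mono
    (d N k ℓ : ℕ) (hk : 1 ≤ k) (hkl : k ≤ ℓ) (hlN : ℓ ≤ N)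
    (fN : Measure (Fin N → (Fin d → ℝ))) [IsProbabilityMeasure fN]
    (fbar : Measure (Fin d → ℝ)) [IsProbabilityMeasure fbar]
    (hsym : ∀ σ : Equiv.Perm (Fin N),
      Measure.map (fun x => x ∘ σ) fN = fN)
    -- the `j`-th marginal of `fN` (projection on the first `j` coordinates):
    (margk : Measure (Fin k → (Fin d → ℝ))) (margl : Measure (Fin ℓ → (Fin d → ℝ)))
    (hmargk : margk = Measure.map
      (fun x (i : Fin k) => x (Fin.castLE (hkl.trans hlN) i)) fN)
    (hmargl : margl = Measure.map
      (fun x (i : Fin ℓ) => x (Fin.castLE hlN i)) fN)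
    (hack : margk ≪ Measure.pi (fun _ : Fin k => fbar))
    (hacl : margl ≪ Measure.pi (fun _ : Fin ℓ => fbar))
    (hintk : Integrable (llr margk (Measure.pi (fun _ : Fin k => fbar))) margk)
    (hintl : Integrable (llr margl (Measure.pi (fun _ : Fin ℓ => fbar))) margl) :
    (1 / (k : ℝ)) * ∫ x, llr margk (Measure.pi (fun _ : Fin k => fbar)) x ∂margk
      ≤ (1 / (ℓ : ℝ)) * ∫ x, llr margl (Measure.pi (fun _ : Fin ℓ => fbar)) x ∂margl := by
  classical
  haveI : NeZero ℓ := ⟨by omega⟩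
  haveI : NeZero k := ⟨by omega⟩
  set β := (Fin d → ℝ)
  set νk : Measure (Fin k → β) := Measure.pi (fun _ : Fin k => fbar) with hνk
  set νl : Measure (Fin ℓ → β) := Measure.pi (fun _ : Fin ℓ => fbar) with hνl
  haveI : IsProbabilityMeasure margk := by
    rw [hmargk]
    exact Measure.isProbabilityMeasure_map
      (measurable_pi_lambda _ (fun j => measurable_pi_apply _)).aemeasurable
  haveI : IsProbabilityMeasure margl := by
    rw [hmargl]
    exact Measure.isProbabilityMeasure_map
      (measurable_pi_lambda _ (fun j => measurable_pi_apply _)).aemeasurable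
  -- the cyclic blocks
  set b : Fin ℓ → Fin k → Fin ℓ := fun r j => r + Fin.castLE hkl j with hb
  have hbinj : ∀ r, Function.Injective (b r) := by
    intro r a a' haa
    exact Fin.castLE_injective hkl (add_right_injective r haa)
  set S : Fin ℓ → Finset (Fin ℓ) := fun r => Finset.image (b r) Finset.univ with hS
  set sel : Fin ℓ → (Fin ℓ → β) → (Fin k → β) := fun r y j => y (b r j) with hsel
  have hselmeas : ∀ r, Measurable (sel r) := fun r =>
    measurable_pi_lambda _ (fun j => measurable_pi_apply _)
  -- block marginals of margl are margk
  have hmapsel : ∀ r, Measure.map (sel r) margl = margk := by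
    intro r
    have hcomp : sel r ∘ (fun (x : Fin N → β) (i : Fin ℓ) => x (Fin.castLE hlN i))
        = fun (x : Fin N → β) (j : Fin k) => x (Fin.castLE hlN (b r j)) := rfl
    rw [hmargl, Measure.map_map (hselmeas r)
      (measurable_pi_lambda _ (fun j => measurable_pi_apply _)), hcomp]
    have hinj : Function.Injective (fun j : Fin k => Fin.castLE hlN (b r j)) :=
      (Fin.castLE_injective hlN).comp (hbinj r)
    rw [my_marginal_eq (hkl.trans hlN) fN hsym _ hinj, ← hmargk]
  -- block marginals of νl are νk
  have hmapselν : ∀ r, Measure.map (sel r) νl = νk := fun r => my_map_sel_pi fbar (b r) (hbinj r)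
  -- coverage
  have hcover : ∀ i : Fin ℓ,
      ∑ r : Fin ℓ, (if i ∈ S r then (1 / (k:ℝ)) else 0) = 1 := by
    intro i
    have hmem : ∀ r : Fin ℓ, i ∈ S r ↔ r ∈ Finset.image (fun j : Fin k => i - Fin.castLE hkl j)
        Finset.univ := by
      intro r
      simp only [hS, Finset.mem_image, Finset.mem_univ, true_and, hb]
      constructor
      · rintro ⟨j, hj⟩; exact ⟨j, by rw [← hj]; simp⟩
      · rintro ⟨j, hj⟩; exact ⟨j, by rw [← hj]; simp⟩
    have hcard : (Finset.image (fun j : Fin k => i - Fin.castLE hkl j) Finset.univ).card = k := by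
      rw [Finset.card_image_of_injective]
      · simp
      · intro a a' haa
        exact Fin.castLE_injective hkl (sub_right_injective haa)
    calc ∑ r : Fin ℓ, (if i ∈ S r then (1 / (k:ℝ)) else 0)
        = ∑ r : Fin ℓ, (if r ∈ Finset.image (fun j : Fin k => i - Fin.castLE hkl j) Finset.univ
            then (1 / (k:ℝ)) else 0) := by
          exact Finset.sum_congr rfl fun r _ => by rw [if_congr (hmem r) rfl rfl]
      _ = ∑ r ∈ Finset.image (fun j : Fin k => i - Fin.castLE hkl j) Finset.univ, (1 / (k:ℝ)) := by
          rw [Finset.sum_ite_mem, Finset.univ_inter]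
      _ = 1 := by
          rw [Finset.sum_const, hcard, nsmul_eq_mul]
          have hkpos : (0:ℝ) < k := by exact_mod_cast hk
          field_simp
  -- the truncated log-density
  set rnk : (Fin k → β) → ℝ := fun z => (margk.rnDeriv νk z).toReal with hrnk
  have hrnkmeas : Measurable rnk := (Measure.measurable_rnDeriv margk νk).ennreal_toReal
  set ec : ℕ → (Fin k → β) → ℝ :=
    fun c z => max (exp (-(c:ℝ))) (min (exp (c:ℝ)) (rnk z)) with hec
  have hecmeas : ∀ c, Measurable (ec c) :=
    fun c => measurable_const.max (measurable_const.min hrnkmeas)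
  have hecpos : ∀ c z, 0 < ec c z := fun c z => lt_max_of_lt_left (exp_pos _)
  set φ : ℕ → (Fin k → β) → ℝ := fun c z => log (ec c z) with hφ
  have hφmeas : ∀ c, Measurable (φ c) := fun c => (hecmeas c).log
  have hφbdd : ∀ c z, |φ c z| ≤ (c : ℝ) := by
    intro c z
    rw [abs_le]
    constructor
    · have h1 : exp (-(c:ℝ)) ≤ ec c z := le_max_left _ _
      have := Real.log_le_log (exp_pos _) h1
      rw [log_exp] at this
      exact this.trans_eq' rfl |>.trans_eq rfl |> fun h => by
        simpa using Real.log_le_log (exp_pos _) h1 |>.trans_eq' (by rw [log_exp])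
    · have h2 : ec c z ≤ exp (c:ℝ) := by
        apply max_le (exp_le_exp.2 (by linarith [Nat.cast_nonneg (α := ℝ) c]))
        exact min_le_left _ _
      have := Real.log_le_log (hecpos c z) h2
      rwa [log_exp] at this
  have hexpφ : ∀ c z, exp (φ c z) = ec c z := fun c z => exp_log (hecpos c z)
  -- the main inequality for each truncation level
  have key : ∀ c : ℕ,
      ((ℓ:ℝ)/k) * ∫ z, φ c z ∂margk - ((ℓ:ℝ)/k) * log (1 + exp (-(c:ℝ)))
        ≤ ∫ x, llr margl νl x ∂margl := by
    intro c
    set f : (Fin ℓ → β) → ℝ := fun y => (1/(k:ℝ)) * ∑ r : Fin ℓ, φ c (sel r y) with hf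
    have hfmeas : Measurable f :=
      measurable_const.mul (Finset.measurable_sum _ fun r _ => (hφmeas c).comp (hselmeas r))
    have hksposR : (0:ℝ) < k := by exact_mod_cast hk
    have hfbdd : ∀ y, |f y| ≤ (1/(k:ℝ)) * (ℓ * c) := by
      intro y
      rw [hf, abs_mul, abs_of_nonneg (by positivity : (0:ℝ) ≤ 1/(k:ℝ))]
      refine mul_le_mul_of_nonneg_left ?_ (by positivity)
      calc |∑ r : Fin ℓ, φ c (sel r y)| ≤ ∑ r : Fin ℓ, |φ c (sel r y)| :=
            Finset.abs_sum_le_sum_abs _ _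
        _ ≤ ∑ _r : Fin ℓ, (c:ℝ) := Finset.sum_le_sum fun r _ => hφbdd c (sel r y)
        _ = ℓ * c := by simp [mul_comm]
    have hfint : Integrable f margl :=
      Integrable.mono' (integrable_const ((1/(k:ℝ)) * (ℓ * c))) hfmeas.aestronglyMeasurable
        (Filter.Eventually.of_forall fun y => (Real.norm_eq_abs _).trans_le (hfbdd y))
    have hexpfint : Integrable (fun y => exp (f y)) νl := by
      refine Integrable.mono' (integrable_const (exp ((1/(k:ℝ)) * (ℓ * c))))
        hfmeas.exp.aestronglyMeasurable (Filter.Eventually.of_forall fun y => ?_)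
      rw [Real.norm_eq_abs, abs_of_nonneg (exp_pos _).le]
      exact exp_le_exp.2 ((le_abs_self _).trans (hfbdd y))
    have gibbs := my_gibbs margl νl hacl hintl f hfint hexpfint
    -- (A) the integral of f against margl
    have htermint : ∀ r : Fin ℓ, Integrable (fun y => φ c (sel r y)) margl := by
      intro r
      refine Integrable.mono' (integrable_const (c:ℝ))
        ((hφmeas c).comp (hselmeas r)).aestronglyMeasurable
        (Filter.Eventually.of_forall fun y => ?_)
      rw [Real.norm_eq_abs]; exact hφbdd c (sel r y)
    have hterm : ∀ r : Fin ℓ, ∫ y, φ c (sel r y) ∂margl = ∫ z, φ c z ∂margk := by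
      intro r
      rw [← hmapsel r,
        integral_map (hselmeas r).aemeasurable (hφmeas c).aestronglyMeasurable]
    have hA : ∫ y, f y ∂margl = ((ℓ:ℝ)/k) * ∫ z, φ c z ∂margk := by
      rw [hf]
      rw [integral_const_mul, integral_finset_sum _ (fun r _ => htermint r)]
      rw [Finset.sum_congr rfl fun r _ => hterm r]
      simp only [Finset.sum_const, Finset.card_univ, Fintype.card_fin, nsmul_eq_mul]
      ring
    -- (B) the exponential moment bound
    set ε := exp (-(c:ℝ)) with hε
    have hεpos : 0 < ε := exp_pos _
    set B : ℝ≥0∞ := ENNReal.ofReal (1 + ε) with hB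
    set g : Fin ℓ → (Fin ℓ → β) → ℝ≥0∞ := fun r y => ENNReal.ofReal (ec c (sel r y)) with hg
    have hgmeas : ∀ r, Measurable (g r) :=
      fun r => ((hecmeas c).comp (hselmeas r)).ennreal_ofReal
    have hpoint : ∀ y, ENNReal.ofReal (exp (f y)) = ∏ r : Fin ℓ, (g r y) ^ ((1:ℝ)/k) := by
      intro y
      have h1 : exp (f y) = ∏ r : Fin ℓ, (ec c (sel r y)) ^ ((1:ℝ)/k) := by
        simp only [hf]
        rw [Finset.mul_sum, Real.exp_sum]
        refine Finset.prod_congr rfl fun r _ => ?_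
        rw [Real.rpow_def_of_pos (hecpos c (sel r y)), ← hexpφ c (sel r y), Real.log_exp,
          mul_comm]
      rw [h1, ENNReal.ofReal_prod_of_nonneg (fun r _ => by positivity)]
      refine Finset.prod_congr rfl fun r _ => ?_
      simp only [hg]
      exact (ENNReal.ofReal_rpow_of_pos (hecpos c (sel r y))).symm
    have hgint : ∀ r, ∫⁻ y, g r y ∂νl ≤ B := by
      intro r
      have hmap : ∫⁻ y, g r y ∂νl = ∫⁻ z, ENNReal.ofReal (ec c z) ∂νk := by
        rw [hg, ← hmapselν r, lintegral_map (hecmeas c).ennreal_ofReal (hselmeas r)]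
      rw [hmap]
      have hpt : ∀ z, ENNReal.ofReal (ec c z) ≤ margk.rnDeriv νk z + ENNReal.ofReal ε := by
        intro z
        calc ENNReal.ofReal (ec c z) ≤ ENNReal.ofReal (rnk z + ε) := by
              refine ENNReal.ofReal_le_ofReal ?_
              rw [hec]
              refine max_le (le_add_of_nonneg_left ENNReal.toReal_nonneg) ?_
              exact (min_le_right _ _).trans (le_add_of_nonneg_right hεpos.le)
          _ = ENNReal.ofReal (rnk z) + ENNReal.ofReal ε :=
              ENNReal.ofReal_add ENNReal.toReal_nonneg hεpos.le
          _ ≤ margk.rnDeriv νk z + ENNReal.ofReal ε := by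
              gcongr
              exact ENNReal.ofReal_toReal_le
      calc ∫⁻ z, ENNReal.ofReal (ec c z) ∂νk
          ≤ ∫⁻ z, (margk.rnDeriv νk z + ENNReal.ofReal ε) ∂νk := lintegral_mono hpt
        _ = (∫⁻ z, margk.rnDeriv νk z ∂νk) + ENNReal.ofReal ε := by
            rw [lintegral_add_right _ measurable_const, lintegral_const, measure_univ, mul_one]
        _ ≤ 1 + ENNReal.ofReal ε := by
            gcongr
            exact (Measure.lintegral_rnDeriv_le).trans (by simp)
        _ = B := by
            rw [hB, ENNReal.ofReal_add (by norm_num) hεpos.le, ENNReal.ofReal_one]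
    have hdep : ∀ r : Fin ℓ, ∀ x y : Fin ℓ → β, (∀ i ∈ S r, x i = y i) → g r x = g r y := by
      intro r x y hxy
      have : sel r x = sel r y := by
        funext j
        exact hxy (b r j) (Finset.mem_image.2 ⟨j, Finset.mem_univ j, rfl⟩)
      rw [hg]
      simp only [this]
    have hlint : ∫⁻ y, ENNReal.ofReal (exp (f y)) ∂νl ≤ B ^ ((ℓ:ℝ)/k) := by
      calc ∫⁻ y, ENNReal.ofReal (exp (f y)) ∂νl
          = ∫⁻ y, ∏ r : Fin ℓ, (g r y) ^ ((1:ℝ)/k) ∂νl := lintegral_congr hpoint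
        _ ≤ ∏ r : Fin ℓ, (∫⁻ y, g r y ∂νl) ^ ((1:ℝ)/k) := by
            refine my_finner fbar Finset.univ S (fun _ => (1:ℝ)/k)
              (fun r _ => by positivity) (fun i => hcover i) g (fun r _ => hgmeas r)
              (fun r _ => hdep r)
        _ ≤ ∏ _r : Fin ℓ, B ^ ((1:ℝ)/k) := by
            refine Finset.prod_le_prod' fun r _ => ?_
            exact ENNReal.rpow_le_rpow (hgint r) (by positivity)
        _ = B ^ ((ℓ:ℝ)/k) := by
            rw [Finset.prod_const, Finset.card_univ, Fintype.card_fin,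
              ← ENNReal.rpow_natCast (B ^ ((1:ℝ)/k)) ℓ, ← ENNReal.rpow_mul]
            congr 1
            field_simp
    have hreal : ∫ y, exp (f y) ∂νl ≤ (1 + ε) ^ ((ℓ:ℝ)/k) := by
      rw [integral_eq_lintegral_of_nonneg_ae (Filter.Eventually.of_forall fun y => (exp_pos _).le)
        hfmeas.exp.aestronglyMeasurable]
      have hBne : B ^ ((ℓ:ℝ)/k) ≠ ⊤ :=
        ENNReal.rpow_ne_top_of_nonneg (by positivity) ENNReal.ofReal_ne_top
      calc (∫⁻ y, ENNReal.ofReal (exp (f y)) ∂νl).toReal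
          ≤ (B ^ ((ℓ:ℝ)/k)).toReal := ENNReal.toReal_mono hBne hlint
        _ = (1 + ε) ^ ((ℓ:ℝ)/k) := by
            rw [← ENNReal.toReal_rpow, hB, ENNReal.toReal_ofReal (by positivity)]
    have hlog : log (∫ y, exp (f y) ∂νl) ≤ ((ℓ:ℝ)/k) * log (1 + ε) := by
      have hpos : 0 < ∫ y, exp (f y) ∂νl := integral_exp_pos hexpfint
      calc log (∫ y, exp (f y) ∂νl) ≤ log ((1 + ε) ^ ((ℓ:ℝ)/k)) := Real.log_le_log hpos hreal
        _ = ((ℓ:ℝ)/k) * log (1 + ε) := Real.log_rpow (by positivity) _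
    rw [hA] at gibbs
    have := sub_le_sub_left hlog (((ℓ:ℝ)/k) * ∫ z, φ c z ∂margk)
    linarith
  -- limits
  have hlim1 : Filter.Tendsto (fun c : ℕ => ∫ z, φ c z ∂margk) Filter.atTop
      (nhds (∫ z, llr margk νk z ∂margk)) := by
    have haefacts : ∀ᵐ z ∂margk, 0 < margk.rnDeriv νk z ∧ margk.rnDeriv νk z < ⊤ :=
      (Measure.rnDeriv_pos hack).and (hack.ae_le (Measure.rnDeriv_lt_top margk νk))
    refine tendsto_integral_of_dominated_convergence (fun z => |llr margk νk z|)
      (fun c => (hφmeas c).aestronglyMeasurable) hintk.abs ?_ ?_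
    · intro c
      filter_upwards [haefacts] with z hz
      obtain ⟨hpos, hlt⟩ := hz
      have htpos : 0 < rnk z := ENNReal.toReal_pos hpos.ne' hlt.ne
      have hllr : llr margk νk z = log (rnk z) := rfl
      rw [Real.norm_eq_abs, hllr]
      rcases le_or_gt 1 (rnk z) with h1 | h1
      · have hmin : (1:ℝ) ≤ min (exp (c:ℝ)) (rnk z) :=
          le_min (one_le_exp (Nat.cast_nonneg c)) h1
        have hecz : ec c z = min (exp (c:ℝ)) (rnk z) :=
          max_eq_right ((exp_le_one_iff.2 (by simp [Nat.cast_nonneg c])).trans hmin)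
        have h2 : ec c z ≤ rnk z := hecz.trans_le (min_le_right _ _)
        have h3 : (1:ℝ) ≤ ec c z := hecz.symm ▸ hmin
        rw [abs_of_nonneg (Real.log_nonneg h3), abs_of_nonneg (Real.log_nonneg h1)]
        exact Real.log_le_log (hecpos c z) h2
      · have hmin : min (exp (c:ℝ)) (rnk z) = rnk z :=
          min_eq_right (h1.le.trans (one_le_exp (Nat.cast_nonneg c)))
        have h2 : rnk z ≤ ec c z := by rw [hec]; simp only [hmin]; exact le_max_right _ _
        have h3 : ec c z ≤ 1 := by
          rw [hec]; simp only [hmin]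
          exact max_le (exp_le_one_iff.2 (by simp [Nat.cast_nonneg c])) h1.le
        rw [abs_of_nonpos (Real.log_nonpos (hecpos c z).le h3),
          abs_of_nonpos (Real.log_nonpos htpos.le h1.le)]
        exact neg_le_neg (Real.log_le_log htpos h2)
    · filter_upwards [haefacts] with z hz
      obtain ⟨hpos, hlt⟩ := hz
      have htpos : 0 < rnk z := ENNReal.toReal_pos hpos.ne' hlt.ne
      have hllr : llr margk νk z = log (rnk z) := rfl
      have hev : (fun _ : ℕ => llr margk νk z) =ᶠ[Filter.atTop] (fun c => φ c z) := by
        refine Filter.eventually_atTop.2 ⟨⌈|log (rnk z)|⌉₊, fun c hc => ?_⟩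
        have hcge : |log (rnk z)| ≤ (c:ℝ) := (Nat.le_ceil _).trans (by exact_mod_cast hc)
        have hmin : min (exp (c:ℝ)) (rnk z) = rnk z := by
          refine min_eq_right ?_
          calc rnk z = exp (log (rnk z)) := (exp_log htpos).symm
            _ ≤ exp (c:ℝ) := exp_le_exp.2 ((le_abs_self _).trans hcge)
        have hmax : ec c z = rnk z := by
          rw [hec]; simp only [hmin]
          refine max_eq_right ?_
          calc exp (-(c:ℝ)) ≤ exp (log (rnk z)) := by
                refine exp_le_exp.2 ?_
                have h5 := neg_abs_le (log (rnk z))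
                linarith
            _ = rnk z := exp_log htpos
        rw [hφ]; simp only [hmax]; exact hllr.symm
      exact Filter.Tendsto.congr' hev tendsto_const_nhds
  have hlim : Filter.Tendsto
      (fun c : ℕ => ((ℓ:ℝ)/k) * ∫ z, φ c z ∂margk - ((ℓ:ℝ)/k) * log (1 + exp (-(c:ℝ))))
      Filter.atTop (nhds (((ℓ:ℝ)/k) * ∫ z, llr margk νk z ∂margk)) := by
    have h2 : Filter.Tendsto (fun c : ℕ => log (1 + exp (-(c:ℝ)))) Filter.atTop (nhds 0) := by
      have : Filter.Tendsto (fun c : ℕ => 1 + exp (-(c:ℝ))) Filter.atTop (nhds 1) := by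
        have hexp : Filter.Tendsto (fun c : ℕ => exp (-(c:ℝ))) Filter.atTop (nhds 0) := by
          refine Real.tendsto_exp_atBot.comp ?_
          exact Filter.tendsto_neg_atBot_iff.2 tendsto_natCast_atTop_atTop
        simpa using tendsto_const_nhds.add hexp
      have := (Real.continuousAt_log (by norm_num : (1:ℝ) ≠ 0)).tendsto.comp this
      simpa [Function.comp_def] using this
    have := ((hlim1.const_mul ((ℓ:ℝ)/k)).sub (h2.const_mul ((ℓ:ℝ)/k)))
    simpa using this
  have main : ((ℓ:ℝ)/k) * ∫ z, llr margk νk z ∂margk ≤ ∫ x, llr margl νl x ∂margl :=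
    le_of_tendsto hlim (Filter.Eventually.of_forall key)
  have hkpos : (0:ℝ) < k := by exact_mod_cast hk
  have hlpos : (0:ℝ) < ℓ := by exact_mod_cast (hk.trans hkl)
  rw [hνk, hνl] at main
  calc (1 / (k : ℝ)) * ∫ x, llr margk (Measure.pi (fun _ : Fin k => fbar)) x ∂margk
      = (1/(ℓ:ℝ)) * (((ℓ:ℝ)/k) * ∫ x, llr margk (Measure.pi (fun _ : Fin k => fbar)) x ∂margk) := by
        field_simp
    _ ≤ (1 / (ℓ : ℝ)) * ∫ x, llr margl (Measure.pi (fun _ : Fin ℓ => fbar)) x ∂margl := by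
        have h1ℓ : (0:ℝ) ≤ 1/(ℓ:ℝ) := by positivity
        exact mul_le_mul_of_nonneg_left main h1ℓ
end

section
/- Let θ be a uniformly random perfect pairing (partition into pairs) of {1, …, N} with N even, and for fixed i let the coupled pairing θ̃ᵢ be constructed by: choose j uniformly from {1,…,N}∖{i}, set θ̃ᵢ(i) = j; if j = θ(i) set θ̃ᵢ = θ, otherwise set θ̃ᵢ(θ(i)) = θ(j) and θ̃ᵢ(ℓ) = θ(ℓ) for ℓ ∉ {i, j, θ(i), θ(j)}. Then θ̃ᵢ has the same law as θ. -/
open Finset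

/-- The set of perfect pairings of `{1,…,N}`: fixed-point-free involutions. -/
def pairings (N : ℕ) : Finset (Fin N → Fin N) :=
  Finset.univ.filter (fun θ => (∀ k, θ (θ k) = k) ∧ ∀ k, θ k ≠ k)

/-- The coupled pairing `θ̃ᵢ`: resample the partner of `i` to be `j` and swap
partners accordingly. -/
def coupled {N : ℕ} (θ : Fin N → Fin N) (i j : Fin N) : Fin N → Fin N :=
  if j = θ i then θ else
    fun ℓ => if ℓ = i then j else if ℓ = j then i
      else if ℓ = θ i then θ j else if ℓ = θ j then θ i else θ ℓ

lemma mem_pairings {N : ℕ} {θ : Fin N → Fin N} :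
    θ ∈ pairings N ↔ (∀ k, θ (θ k) = k) ∧ ∀ k, θ k ≠ k := by
  simp [pairings]

lemma coupled_apply_self {N : ℕ} (θ : Fin N → Fin N) (i j : Fin N) :
    coupled θ i j i = j := by
  unfold coupled
  split_ifs with h
  · exact h.symm
  · simp

lemma coupled_mem {N : ℕ} {θ : Fin N → Fin N} (hθ : θ ∈ pairings N) {i j : Fin N}
    (hij : j ≠ i) : coupled θ i j ∈ pairings N := by
  rw [mem_pairings] at hθ ⊢
  obtain ⟨h1, h2⟩ := hθ
  by_cases hj : j = θ i
  · simp only [coupled, if_pos hj]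
    exact ⟨h1, h2⟩
  have hinj : Function.Injective θ := fun a b h => by rw [← h1 a, h, h1]
  have hii : θ i ≠ i := h2 i
  have hjj : θ j ≠ j := h2 j
  have hiθj : i ≠ θ j := fun h => hj (by rw [h, h1])
  have hθiθj : θ i ≠ θ j := fun h => hij (hinj h).symm
  have hF : coupled θ i j = fun ℓ => if ℓ = i then j else if ℓ = j then i
      else if ℓ = θ i then θ j else if ℓ = θ j then θ i else θ ℓ := if_neg hj
  have Fi : coupled θ i j i = j := by rw [hF]; simp
  have Fj : coupled θ i j j = i := by rw [hF]; simp [hij]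
  have Fθi : coupled θ i j (θ i) = θ j := by
    rw [hF]; simp only [if_neg hii, if_neg (fun h => hj h.symm : θ i ≠ j), if_pos rfl]; simp
  have Fθj : coupled θ i j (θ j) = θ i := by
    rw [hF]
    simp only [if_neg (fun h => hiθj h.symm : θ j ≠ i), if_neg hjj,
      if_neg (fun h => hθiθj h.symm : θ j ≠ θ i), if_pos rfl]; simp
  have Fother : ∀ ℓ, ℓ ≠ i → ℓ ≠ j → ℓ ≠ θ i → ℓ ≠ θ j → coupled θ i j ℓ = θ ℓ := by
    intro ℓ a b c d; rw [hF]; simp [a, b, c, d]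
  constructor
  · intro k
    by_cases hk1 : k = i
    · rw [hk1, Fi, Fj]
    by_cases hk2 : k = j
    · rw [hk2, Fj, Fi]
    by_cases hk3 : k = θ i
    · rw [hk3, Fθi, Fθj]
    by_cases hk4 : k = θ j
    · rw [hk4, Fθj, Fθi]
    · rw [Fother k hk1 hk2 hk3 hk4,
        Fother (θ k) (fun h => hk3 (by rw [← h, h1]))
          (fun h => hk4 (by rw [← h, h1]))
          (fun h => hk1 (hinj h)) (fun h => hk2 (hinj h)), h1]
  · intro k
    by_cases hk1 : k = i
    · rw [hk1, Fi]; exact hij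
    by_cases hk2 : k = j
    · rw [hk2, Fj]; exact fun h => hij h.symm
    by_cases hk3 : k = θ i
    · rw [hk3, Fθi]; exact fun h => hθiθj h.symm
    by_cases hk4 : k = θ j
    · rw [hk4, Fθj]; exact hθiθj
    · rw [Fother k hk1 hk2 hk3 hk4]; exact h2 k

lemma coupled_coupled {N : ℕ} {θ : Fin N → Fin N} (hθ : θ ∈ pairings N) {i j : Fin N}
    (hij : j ≠ i) : coupled (coupled θ i j) i (θ i) = θ := by
  rw [mem_pairings] at hθ
  obtain ⟨h1, h2⟩ := hθ
  by_cases hj : j = θ i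
  · rw [show coupled θ i j = θ from if_pos hj]
    exact if_pos rfl
  have hinj : Function.Injective θ := fun a b h => by rw [← h1 a, h, h1]
  have hii : θ i ≠ i := h2 i
  have hjj : θ j ≠ j := h2 j
  have hiθj : i ≠ θ j := fun h => hj (by rw [h, h1])
  have hθiθj : θ i ≠ θ j := fun h => hij (hinj h).symm
  set σ := coupled θ i j with hσdef
  have hF : σ = fun ℓ => if ℓ = i then j else if ℓ = j then i
      else if ℓ = θ i then θ j else if ℓ = θ j then θ i else θ ℓ := if_neg hj
  have Fi : σ i = j := by rw [hF]; simp
  have Fj : σ j = i := by rw [hF]; simp [hij]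
  have Fθi : σ (θ i) = θ j := by
    rw [hF]; simp only [if_neg hii, if_neg (fun h => hj h.symm : θ i ≠ j), if_pos rfl]; simp
  have Fθj : σ (θ j) = θ i := by
    rw [hF]
    simp only [if_neg (fun h => hiθj h.symm : θ j ≠ i), if_neg hjj,
      if_neg (fun h => hθiθj h.symm : θ j ≠ θ i), if_pos rfl]; simp
  have Fother : ∀ ℓ, ℓ ≠ i → ℓ ≠ j → ℓ ≠ θ i → ℓ ≠ θ j → σ ℓ = θ ℓ := by
    intro ℓ a b c d; rw [hF]; simp [a, b, c, d]
  have houter : coupled σ i (θ i) = fun ℓ => if ℓ = i then θ i else if ℓ = θ i then i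
      else if ℓ = σ i then σ (θ i) else if ℓ = σ (θ i) then σ i else σ ℓ :=
    if_neg (by rw [Fi]; exact fun h => hj h.symm)
  rw [houter]
  funext ℓ
  by_cases hl1 : ℓ = i
  · subst hl1; rw [if_pos rfl]
  by_cases hl2 : ℓ = θ i
  · subst hl2; rw [if_neg hii, if_pos rfl, h1]
  by_cases hl3 : ℓ = j
  · subst hl3; rw [if_neg hij, if_neg hj, Fi, if_pos rfl, Fθi]
  by_cases hl4 : ℓ = θ j
  · subst hl4
    rw [if_neg (fun h => hiθj h.symm : θ j ≠ i), if_neg (fun h => hθiθj h.symm : θ j ≠ θ i),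
      Fi, if_neg hjj, Fθi, if_pos rfl, h1]
  · rw [if_neg hl1, if_neg hl2, Fi, if_neg hl3, Fθi, if_neg hl4]
    exact Fother ℓ hl1 hl3 hl2 hl4

lemma count_lemma {N : ℕ} (i : Fin N) {σ : Fin N → Fin N} (hσ : σ ∈ pairings N) :
    (((pairings N) ×ˢ (Finset.univ.erase i)).filter
      (fun p => σ = coupled p.1 i p.2)).card = (Finset.univ.erase i).card := by
  have hσ' := (mem_pairings.1 hσ)
  refine Finset.card_nbij' (fun p => p.1 i) (fun m => (coupled σ i m, σ i)) ?_ ?_ ?_ ?_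
  · rintro ⟨θ, j⟩ hp
    simp only [Finset.mem_coe, Finset.mem_filter, Finset.mem_product, Finset.mem_erase, Finset.mem_univ,
      and_true] at hp ⊢
    exact (mem_pairings.1 hp.1.1).2 i
  · intro m hm
    simp only [Finset.mem_coe, Finset.mem_erase, Finset.mem_univ, and_true] at hm
    simp only [Finset.mem_coe, Finset.mem_filter, Finset.mem_product, Finset.mem_erase, Finset.mem_univ, and_true]
    exact ⟨⟨coupled_mem hσ hm, hσ'.2 i⟩, (coupled_coupled hσ hm).symm⟩
  · rintro ⟨θ, j⟩ hp
    simp only [Finset.mem_coe, Finset.mem_filter, Finset.mem_product, Finset.mem_erase, Finset.mem_univ,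
      and_true] at hp
    obtain ⟨⟨hθ, hji⟩, hc⟩ := hp
    have h1 : σ i = j := by rw [hc, coupled_apply_self]
    have h2 : coupled σ i (θ i) = θ := by rw [hc]; exact coupled_coupled hθ hji
    simp only [Prod.mk.injEq]
    exact ⟨h2, h1⟩
  · intro m hm
    exact coupled_apply_self σ i m

set_option maxHeartbeats 1000000 in
/-- If `θ` is a uniformly random perfect pairing of `{1,…,N}` (`N` even) and `j` is
uniform on `{1,…,N}∖{i}`, then the coupled pairing `θ̃ᵢ = coupled θ i j` has the same
law as `θ`. -/
theorem coupled_pairing_same_law (N : ℕ) (hN : Even N) (i : Fin N)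
    (hpair : (pairings N).Nonempty) (herase : (Finset.univ.erase i).Nonempty) :
    ((PMF.uniformOfFinset (pairings N) hpair).bind fun θ =>
        (PMF.uniformOfFinset (Finset.univ.erase i) herase).map fun j => coupled θ i j)
      = PMF.uniformOfFinset (pairings N) hpair := by
  ext σ
  simp only [PMF.bind_apply, PMF.map_apply, PMF.uniformOfFinset_apply, tsum_fintype]
  simp only [ite_mul, zero_mul]
  rw [Finset.sum_ite_mem, Finset.univ_inter]
  by_cases hσ : σ ∈ pairings N
  · rw [if_pos hσ]
    trans (∑ p ∈ (pairings N) ×ˢ (Finset.univ.erase i),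
        if σ = coupled p.1 i p.2
          then ((pairings N).card : ENNReal)⁻¹ * ((Finset.univ.erase i).card : ENNReal)⁻¹ else 0)
    · rw [Finset.sum_product]
      refine Finset.sum_congr rfl fun θ _ => ?_
      rw [Finset.mul_sum]
      trans (∑ a : Fin N, if a ∈ Finset.univ.erase i
          then (if σ = coupled θ i a
            then ((pairings N).card : ENNReal)⁻¹ * ((Finset.univ.erase i).card : ENNReal)⁻¹
            else 0) else 0)
      · refine Finset.sum_congr rfl fun j _ => ?_
        split_ifs <;> simp
      · rw [Finset.sum_ite_mem, Finset.univ_inter]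
    · rw [← Finset.sum_filter, Finset.sum_const, nsmul_eq_mul, count_lemma i hσ]
      have hE0 : (((Finset.univ.erase i).card : ℕ) : ENNReal) ≠ 0 :=
        Nat.cast_ne_zero.mpr (Finset.card_pos.mpr herase).ne'
      have h1 : (((Finset.univ.erase i).card : ℕ) : ENNReal)
          * (((Finset.univ.erase i).card : ℕ) : ENNReal)⁻¹ = 1 :=
        ENNReal.mul_inv_cancel hE0 (ENNReal.natCast_ne_top _)
      calc (((Finset.univ.erase i).card : ℕ) : ENNReal)
            * (((pairings N).card : ENNReal)⁻¹ * ((Finset.univ.erase i).card : ENNReal)⁻¹)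
          = (((Finset.univ.erase i).card : ℕ) : ENNReal)
              * ((Finset.univ.erase i).card : ENNReal)⁻¹
              * ((pairings N).card : ENNReal)⁻¹ := by ring
        _ = ((pairings N).card : ENNReal)⁻¹ := by rw [h1, one_mul]
  · rw [if_neg hσ]
    refine Finset.sum_eq_zero fun θ hθ => ?_
    rw [mul_eq_zero]
    right
    refine Finset.sum_eq_zero fun j _ => ?_
    by_cases hj : j ∈ Finset.univ.erase i
    · rw [if_neg (show ¬ σ = coupled θ i j from fun h =>
        hσ (h ▸ coupled_mem hθ (Finset.mem_erase.mp hj).1))]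
    · split_ifs <;> first | rfl | exact absurd ‹j ∈ Finset.univ.erase i› hj
end

section
/- With θ a uniformly random perfect pairing of {1,…,N} and θ̃ᵢ the coupled pairing as constructed, for every i and every j ≠ i one has P(θ(i) = j | θ̃ᵢ) = 1/(N−1). -/
open Finset MeasureTheory

variable {N : ℕ}

lemma mem_pairings_iff {θ : Fin N → Fin N} :
    θ ∈ pairings N ↔ (∀ k, θ (θ k) = k) ∧ ∀ k, θ k ≠ k := by
  simp [pairings]

lemma coupled_apply_fst (θ : Fin N → Fin N) (i k : Fin N) : coupled θ i k i = k := by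
  unfold coupled
  split
  · rename_i h; exact h.symm
  · simp

lemma coupled_eq_conj {σ : Fin N → Fin N} (hσ1 : ∀ k, σ (σ k) = k) (hσ2 : ∀ k, σ k ≠ k)
    (i k : Fin N) (hk : k ≠ i) :
    coupled σ i k = fun ℓ => Equiv.swap k (σ i) (σ (Equiv.swap k (σ i) ℓ)) := by
  by_cases h : k = σ i
  · rw [coupled, if_pos h, h, Equiv.swap_self]
    simp [hσ1]
  · have hinj : Function.Injective σ := Function.LeftInverse.injective hσ1
    have hii : σ i ≠ i := hσ2 i
    have hsk : σ k ≠ k := hσ2 k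
    have hski : σ k ≠ σ i := fun e => hk (hinj e)
    have hsk_i : σ k ≠ i := fun e => h ((hσ1 k).symm.trans (congrArg σ e))
    funext ℓ
    rcases eq_or_ne ℓ i with rfl | h1
    · simp [coupled, if_neg h, Equiv.swap_apply_def, hk, Ne.symm hk, hii, Ne.symm hii, h,
        Ne.symm h, hsk, Ne.symm hsk, hski, Ne.symm hski, hsk_i, Ne.symm hsk_i, hσ1]
    rcases eq_or_ne ℓ k with rfl | h2
    · simp [coupled, if_neg h, Equiv.swap_apply_def, hk, Ne.symm hk, hii, Ne.symm hii, h,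
        Ne.symm h, hsk, Ne.symm hsk, hski, Ne.symm hski, hsk_i, Ne.symm hsk_i, hσ1]
    rcases eq_or_ne ℓ (σ i) with rfl | h3
    · simp [coupled, if_neg h, Equiv.swap_apply_def, hk, Ne.symm hk, hii, Ne.symm hii, h,
        Ne.symm h, hsk, Ne.symm hsk, hski, Ne.symm hski, hsk_i, Ne.symm hsk_i, hσ1, h1, h2,
        Ne.symm h1, Ne.symm h2]
    rcases eq_or_ne ℓ (σ k) with rfl | h4
    · simp [coupled, if_neg h, Equiv.swap_apply_def, hk, Ne.symm hk, hii, Ne.symm hii, h,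
        Ne.symm h, hsk, Ne.symm hsk, hski, Ne.symm hski, hsk_i, Ne.symm hsk_i, hσ1, h1, h2,
        Ne.symm h1, Ne.symm h2, h3, Ne.symm h3]
    · have e1 : σ ℓ ≠ k := fun e => h4 (by rw [← e, hσ1])
      have e2 : σ ℓ ≠ σ i := fun e => h1 (hinj e)
      simp [coupled, if_neg h, Equiv.swap_apply_def, h1, h2, h3, h4, e1, e2, Ne.symm h1,
        Ne.symm h2, Ne.symm h3, Ne.symm h4, Ne.symm e1, Ne.symm e2]

lemma coupled_mem_s13 {σ : Fin N → Fin N} (hσ : σ ∈ pairings N) {i k : Fin N} (hk : k ≠ i) :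
    coupled σ i k ∈ pairings N := by
  obtain ⟨hσ1, hσ2⟩ := mem_pairings_iff.1 hσ
  rw [mem_pairings_iff, coupled_eq_conj hσ1 hσ2 i k hk]
  constructor
  · intro ℓ; simp [Equiv.swap_apply_self, hσ1]
  · intro ℓ e
    apply hσ2 (Equiv.swap k (σ i) ℓ)
    have := congrArg (Equiv.swap k (σ i)) e
    simpa [Equiv.swap_apply_self] using this

lemma coupled_invol {θ : Fin N → Fin N} (hθ : θ ∈ pairings N) {i k : Fin N} (hk : k ≠ i) :
    coupled (coupled θ i k) i (θ i) = θ := by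
  obtain ⟨h1, h2⟩ := mem_pairings_iff.1 hθ
  obtain ⟨t1, t2⟩ := mem_pairings_iff.1 (coupled_mem_s13 hθ hk)
  have hti : θ i ≠ i := h2 i
  have happ : coupled θ i k i = k := coupled_apply_fst θ i k
  rw [coupled_eq_conj t1 t2 i (θ i) hti]
  funext ℓ
  rw [happ, coupled_eq_conj h1 h2 i k hk]
  simp only [Equiv.swap_comm (θ i) k]
  simp [Equiv.swap_apply_self]

open scoped Classical in
lemma filter_coupled_eq {θ σ : Fin N → Fin N} (hθ : θ ∈ pairings N) (hσ : σ ∈ pairings N)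
    (i : Fin N) :
    (Finset.univ.erase i).filter (fun j' => coupled θ i j' = σ) =
      if coupled θ i (σ i) = σ then {σ i} else ∅ := by
  obtain ⟨s1, s2⟩ := mem_pairings_iff.1 hσ
  ext j'
  simp only [mem_filter, mem_erase, mem_univ, and_true, true_and]
  split_ifs with h
  · simp only [mem_singleton]
    constructor
    · rintro ⟨hji, hc⟩
      have hfst := coupled_apply_fst θ i j'
      rw [hc] at hfst
      exact hfst.symm
    · rintro rfl
      exact ⟨s2 i, h⟩
  · simp only [notMem_empty, iff_false]
    rintro ⟨hji, hc⟩
    apply h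
    have hsj : σ i = j' := by rw [← hc]; exact coupled_apply_fst θ i j'
    rw [hsj]; exact hc

open scoped Classical in
lemma filter_coupled_pair {θ σ : Fin N → Fin N} (hθ : θ ∈ pairings N) (hσ : σ ∈ pairings N)
    {i j : Fin N} (hj : j ≠ i) :
    (Finset.univ.erase i).filter (fun j' => θ i = j ∧ coupled θ i j' = σ) =
      if θ = coupled σ i j then {σ i} else ∅ := by
  obtain ⟨s1, s2⟩ := mem_pairings_iff.1 hσ
  ext j'
  simp only [mem_filter, mem_erase, mem_univ, and_true, true_and]
  split_ifs with h
  · simp only [mem_singleton]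
    constructor
    · rintro ⟨hji, hij, hc⟩
      have hfst := coupled_apply_fst θ i j'
      rw [hc] at hfst
      exact hfst.symm
    · rintro rfl
      refine ⟨s2 i, ?_, ?_⟩
      · rw [h]; exact coupled_apply_fst σ i j
      · rw [h]; exact coupled_invol hσ hj
  · simp only [notMem_empty, iff_false]
    rintro ⟨hji, hij, hc⟩
    apply h
    have := coupled_invol hθ hji
    rw [hc, hij] at this
    exact this.symm

open scoped Classical in
lemma card_filter_coupled {σ : Fin N → Fin N} (hσ : σ ∈ pairings N) (i : Fin N) :
    ((pairings N).filter (fun θ => coupled θ i (σ i) = σ)).card =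
      (Finset.univ.erase i : Finset (Fin N)).card := by
  obtain ⟨s1, s2⟩ := mem_pairings_iff.1 hσ
  have hii : σ i ≠ i := s2 i
  apply Finset.card_bij' (fun θ _ => θ i) (fun k _ => coupled σ i k)
  · intro θ hθ
    obtain ⟨hθP, _⟩ := mem_filter.1 hθ
    exact mem_erase.2 ⟨(mem_pairings_iff.1 hθP).2 i, mem_univ _⟩
  · intro k hk
    have hki : k ≠ i := (mem_erase.1 hk).1
    exact mem_filter.2 ⟨coupled_mem_s13 hσ hki, coupled_invol hσ hki⟩
  · intro θ hθ
    obtain ⟨hθP, hcond⟩ := mem_filter.1 hθ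
    have := coupled_invol hθP hii
    rw [hcond] at this
    exact this
  · intro k hk
    exact coupled_apply_fst σ i k

/-- With `θ` a uniformly random perfect pairing and `θ̃ᵢ` the coupled pairing,
`P(θ(i) = j | θ̃ᵢ) = 1/(N−1)` for every `j ≠ i`: for every possible value `σ` of
`θ̃ᵢ`, `P(θ(i) = j, θ̃ᵢ = σ) = (N−1)⁻¹ P(θ̃ᵢ = σ)`. -/
theorem coupled_pairing_conditional (N : ℕ) (hN : Even N) (i : Fin N)
    (hpair : (pairings N).Nonempty) (herase : (Finset.univ.erase i).Nonempty)
    (j : Fin N) (hj : j ≠ i) (σ : Fin N → Fin N) (hσ : σ ∈ pairings N) :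
    letI : MeasurableSpace ((Fin N → Fin N) × (Fin N → Fin N)) := ⊤
    letI joint : PMF ((Fin N → Fin N) × (Fin N → Fin N)) :=
      (PMF.uniformOfFinset (pairings N) hpair).bind fun θ =>
        (PMF.uniformOfFinset (Finset.univ.erase i) herase).map fun j' => (θ, coupled θ i j')
    joint.toMeasure {p | p.1 i = j ∧ p.2 = σ}
      = ((N : ENNReal) - 1)⁻¹ * joint.toMeasure {p | p.2 = σ} := by
  classical
  obtain ⟨hσ1, hσ2⟩ := mem_pairings_iff.1 hσ
  have hN2 : 2 ≤ N := by
    have : 1 < Fintype.card (Fin N) := Fintype.one_lt_card_iff_nontrivial.2 ⟨⟨j, i, hj⟩⟩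
    simp at this; omega
  have hEcard : (Finset.univ.erase i).card = N - 1 := by
    rw [Finset.card_erase_of_mem (mem_univ i), Finset.card_univ, Fintype.card_fin]
  have hcast : ((N - 1 : ℕ) : ENNReal) = (N : ENNReal) - 1 := by
    rw [ENNReal.natCast_sub]; simp
  have he0 : ((N : ENNReal) - 1) ≠ 0 := by
    rw [← hcast]
    exact Nat.cast_ne_zero.2 (by omega)
  have heT : ((N : ENNReal) - 1) ≠ ⊤ := by
    rw [← hcast]; exact ENNReal.natCast_ne_top _
  letI : MeasurableSpace ((Fin N → Fin N) × (Fin N → Fin N)) := ⊤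
  have key : ∀ (s : Set ((Fin N → Fin N) × (Fin N → Fin N)))
      (Q : (Fin N → Fin N) → Fin N → Prop) [∀ θ, DecidablePred (Q θ)],
      (∀ θ j', ((θ, coupled θ i j') ∈ s ↔ Q θ j')) →
      ((PMF.uniformOfFinset (pairings N) hpair).bind fun θ =>
        (PMF.uniformOfFinset (Finset.univ.erase i) herase).map
          fun j' => (θ, coupled θ i j')).toMeasure s
      = ∑ θ ∈ pairings N, ((pairings N).card : ENNReal)⁻¹ *
          ((((Finset.univ.erase i).filter (Q θ)).card : ENNReal)
            / ((Finset.univ.erase i).card : ENNReal)) := by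
    intro s Q _ hQ
    rw [PMF.toMeasure_bind_apply _ _ _ MeasurableSpace.measurableSet_top, tsum_fintype]
    have hmap : ∀ θ : Fin N → Fin N,
        ((PMF.uniformOfFinset (Finset.univ.erase i) herase).map
          fun j' => (θ, coupled θ i j')).toMeasure s
        = (((Finset.univ.erase i).filter (Q θ)).card : ENNReal)
            / ((Finset.univ.erase i).card : ENNReal) := by
      intro θ
      rw [PMF.toMeasure_map_apply _ _ _ Measurable.of_discrete
          MeasurableSpace.measurableSet_top,
        PMF.toMeasure_uniformOfFinset_apply herase _ MeasurableSpace.measurableSet_top]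
      have hfilt : (Finset.univ.erase i).filter
            (fun x => x ∈ (fun j' => (θ, coupled θ i j')) ⁻¹' s)
          = (Finset.univ.erase i).filter (Q θ) := by
        ext x
        simp [Set.mem_preimage, hQ]
      rw [hfilt]
    simp only [hmap, PMF.uniformOfFinset_apply, ite_mul, zero_mul]
    rw [Finset.sum_ite_mem, Finset.univ_inter]
  rw [key {p | p.1 i = j ∧ p.2 = σ} (fun θ j' => θ i = j ∧ coupled θ i j' = σ)
      (fun θ j' => Iff.rfl),
    key {p | p.2 = σ} (fun θ j' => coupled θ i j' = σ) (fun θ j' => Iff.rfl)]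
  have stepA : ∀ θ ∈ pairings N, ((pairings N).card : ENNReal)⁻¹ *
        ((((Finset.univ.erase i).filter
          (fun j' => θ i = j ∧ coupled θ i j' = σ)).card : ENNReal)
          / ((Finset.univ.erase i).card : ENNReal))
      = if θ = coupled σ i j then
          ((pairings N).card : ENNReal)⁻¹ * ((N : ENNReal) - 1)⁻¹ else 0 := by
    intro θ hθ
    have hfe : (Finset.univ.erase i).filter
          (fun j' => θ i = j ∧ coupled θ i j' = σ)
        = if θ = coupled σ i j then {σ i} else ∅ := by
      exact filter_coupled_pair hθ hσ hj
    rw [hfe]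
    split_ifs with h
    · rw [Finset.card_singleton, hEcard, Nat.cast_one, hcast, one_div]
    · simp
  have stepB : ∀ θ ∈ pairings N, ((pairings N).card : ENNReal)⁻¹ *
        ((((Finset.univ.erase i).filter
          (fun j' => coupled θ i j' = σ)).card : ENNReal)
          / ((Finset.univ.erase i).card : ENNReal))
      = if coupled θ i (σ i) = σ then
          ((pairings N).card : ENNReal)⁻¹ * ((N : ENNReal) - 1)⁻¹ else 0 := by
    intro θ hθ
    have hfe : (Finset.univ.erase i).filter
          (fun j' => coupled θ i j' = σ)
        = if coupled θ i (σ i) = σ then {σ i} else ∅ := by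
      exact filter_coupled_eq hθ hσ i
    rw [hfe]
    split_ifs with h
    · rw [Finset.card_singleton, hEcard, Nat.cast_one, hcast, one_div]
    · simp
  rw [Finset.sum_congr rfl stepA, Finset.sum_congr rfl stepB,
    Finset.sum_ite_eq' (pairings N) (coupled σ i j), if_pos (coupled_mem_s13 hσ hj),
    ← Finset.sum_filter, Finset.sum_const, card_filter_coupled hσ i, hEcard, nsmul_eq_mul,
    hcast, ← mul_assoc, ENNReal.inv_mul_cancel he0 heT, one_mul]
end
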